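/- arXiv:1702.00549 — 2 statements merged into one kernel-verified Lean document; each statement's English description precedes it below -/
import Mathlib

section
/- Let q be a prime power and let V be a t-dimensional vector space over F_q, where t ≥ 2 is even, equipped with a non-degenerate alternating bilinear form B. Then the number of F_q-subspaces W of V satisfying W ∩ W^⊥ = {0} equals 2 + Σ_{k even, 2 ≤ k ≤ t−1} q^{k(t−k)/2} [t/2, k/2]_{q²}. -/
/-!
A symplectic family of length `m` is a pair of `m`-tuples `(e, f)` with `B eᵢ eⱼ = B fᵢ fⱼ = 0`
and `B eᵢ fⱼ = δᵢⱼ`. In a nondegenerate alternating space of dimension `d` over `𝔽_q` the first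
pair `(e₀, f₀)` can be chosen in `(q^d - 1) q^(d-1)` ways, and the rest of the family is a
symplectic family in the nondegenerate space `⟨e₀, f₀⟩^⊥` of dimension `d - 2`; hence there are
`∏_{i<m} (q^(d-2i) - 1) q^(d-2i-1)` such families. Each one spans a nondegenerate subspace of
dimension `2m`, and the families spanning a given such `W` are exactly the symplectic bases of `W`.
Dividing the count for `V` by the count for `W` gives `q^(2m(n-m)) [n, m]_{q²}` nondegenerate
subspaces of dimension `2m` when `dim V = 2n`. Nondegenerate subspaces have even dimension, so
summing over `m` (the terms `m = 0` and `m = n` are `1`) gives the formula.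
-/

/-- Gaussian binomial coefficient with rational base `Q`:
`[a, b]_Q = ∏_{i=0}^{b-1} (Q^a - Q^i)/(Q^b - Q^i)`. -/
def gbinom (Q : ℚ) (a b : ℕ) : ℚ :=
  ∏ i ∈ Finset.range b, (Q ^ a - Q ^ i) / (Q ^ b - Q ^ i)

open Module Finset LinearMap.BilinForm

theorem Nat.card_sigma_of_card_eq {ι : Type*} {T : ι → Type*} [Finite ι] [∀ i, Finite (T i)]
    {c : ℕ} (h : ∀ i, Nat.card (T i) = c) : Nat.card (Σ i, T i) = Nat.card ι * c := by
  have := Fintype.ofFinite ι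
  rw [Nat.card_sigma, sum_const_nat fun i _ => h i, Finset.card_univ, Nat.card_eq_fintype_card]

theorem range_sumElim_pair {α : Type*} {a b : α} : Set.range (Sum.elim ![a] ![b]) = {a, b} := by
  simp [Set.Sum.elim_range, Set.pair_comm]

theorem Nat.card_eq_sum_card_fiber {α β : Type*} [Finite α] (f : α → β) {s : Finset β}
    (hs : ∀ a, f a ∈ s) : Nat.card α = ∑ b ∈ s, Nat.card {a // f a = b} := by
  classical
  have := Fintype.ofFinite α
  rw [Nat.card_eq_fintype_card, ← Finset.card_univ, card_eq_sum_card_fiberwise fun a _ => hs a]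
  exact sum_congr rfl fun b _ => by rw [Nat.card_eq_fintype_card, Fintype.card_subtype]

def symplecticCount (q d m : ℕ) : ℕ :=
  ∏ i ∈ range m, (q ^ (d - 2 * i) - 1) * q ^ (d - 2 * i - 1)

theorem symplecticCount_succ (q d m : ℕ) :
    symplecticCount q d (m + 1) = (q ^ d - 1) * q ^ (d - 1) * symplecticCount q (d - 2) m := by
  rw [symplecticCount, symplecticCount, prod_range_succ', mul_comm]
  simp only [mul_zero, Nat.sub_zero]
  congr 1
  refine prod_congr rfl fun i _ => ?_
  rw [show d - 2 * (i + 1) = d - 2 - 2 * i by omega]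

theorem symplecticCount_pos {q d m : ℕ} (hq : 1 < q) (h : 2 * m ≤ d + 1) :
    0 < symplecticCount q d m :=
  prod_pos fun i hi => by
    have : 1 < q ^ (d - 2 * i) := Nat.one_lt_pow (by grind) hq
    exact Nat.mul_pos (by omega) (pow_pos (by omega) _)

theorem gbinom_zero (Q : ℚ) (a : ℕ) : gbinom Q a 0 = 1 :=
  prod_range_zero _

theorem gbinom_self {Q : ℚ} (hQ : 1 < Q) (a : ℕ) : gbinom Q a a = 1 :=
  prod_eq_one fun _ hi => div_self (sub_ne_zero.mpr (pow_lt_pow_right₀ hQ (mem_range.mp hi)).ne')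

theorem symplecticCount_factor_eq {x : ℚ} (hx : 1 < x) {i m n : ℕ} (him : i < m) (hmn : m ≤ n) :
    (x ^ (n + n - 2 * i) - 1) * x ^ (n + n - 2 * i - 1) =
      x ^ (2 * (n - m)) * (((x ^ 2) ^ n - (x ^ 2) ^ i) / ((x ^ 2) ^ m - (x ^ 2) ^ i)) *
        ((x ^ (m + m - 2 * i) - 1) * x ^ (m + m - 2 * i - 1)) := by
  obtain ⟨r, rfl⟩ := Nat.exists_eq_add_of_le hmn
  obtain ⟨j, rfl⟩ := Nat.exists_eq_add_of_lt him
  have hden : (x ^ 2) ^ (i + j + 1) - (x ^ 2) ^ i ≠ 0 :=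
    sub_ne_zero.mpr (pow_lt_pow_right₀ (one_lt_pow₀ hx two_ne_zero) (by omega)).ne'
  rw [show i + j + 1 + r + (i + j + 1 + r) - 2 * i - 1 = 2 * j + 2 * r + 1 by omega,
    show i + j + 1 + r + (i + j + 1 + r) - 2 * i = 2 * j + 2 * r + 2 by omega,
    show i + j + 1 + (i + j + 1) - 2 * i - 1 = 2 * j + 1 by omega,
    show i + j + 1 + (i + j + 1) - 2 * i = 2 * j + 2 by omega, Nat.add_sub_cancel_left]
  field_simp
  ring

theorem symplecticCount_eq_mul {q m n : ℕ} (hq : 1 < q) (hmn : m ≤ n) :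
    (symplecticCount q (n + n) m : ℚ) =
      (q : ℚ) ^ (2 * (m * (n - m))) * gbinom ((q : ℚ) ^ 2) n m * symplecticCount q (m + m) m := by
  have hcast : ∀ d, (symplecticCount q d m : ℚ) =
      ∏ i ∈ range m, (((q : ℚ) ^ (d - 2 * i) - 1) * (q : ℚ) ^ (d - 2 * i - 1)) := fun d => by
    simp [symplecticCount, Nat.cast_sub (Nat.one_le_pow _ _ (by omega : 0 < q))]
  have hpow : (q : ℚ) ^ (2 * (m * (n - m))) = ∏ _i ∈ range m, (q : ℚ) ^ (2 * (n - m)) := by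
    rw [prod_const, card_range, ← pow_mul]
    ring_nf
  rw [hcast, hcast, gbinom, hpow, ← prod_mul_distrib, ← prod_mul_distrib]
  exact prod_congr rfl fun i hi =>
    symplecticCount_factor_eq (by exact_mod_cast hq) (mem_range.mp hi) hmn

namespace LinearMap
namespace BilinForm

variable {F V : Type*} [Field F] [AddCommGroup V] [Module F V] {B : LinearMap.BilinForm F V}

def IsSymplecticFamily (B : LinearMap.BilinForm F V) {m : ℕ} (e f : Fin m → V) : Prop :=
  ∀ i j, B (e i) (e j) = 0 ∧ B (f i) (f j) = 0 ∧ B (e i) (f j) = if i = j then 1 else 0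

abbrev SymplecticFamily (B : LinearMap.BilinForm F V) (m : ℕ) : Type _ :=
  {p : (Fin m → V) × (Fin m → V) // B.IsSymplecticFamily p.1 p.2}

theorem mem_orthogonal_span_pair {a b x : V} :
    x ∈ B.orthogonal (Submodule.span F {a, b}) ↔ B a x = 0 ∧ B b x = 0 := by
  simp only [mem_orthogonal_iff, Submodule.mem_span_pair, forall_exists_index]
  constructor
  · intro h
    exact ⟨by simpa using h _ 1 0 rfl, by simpa using h _ 0 1 rfl⟩
  · rintro ⟨ha, hb⟩ _ c d rfl
    simp [ha, hb]

theorem isSymplecticFamily_cons_iff (hB : B.IsAlt) {m : ℕ} {a b : V} {e f : Fin m → V} :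
    B.IsSymplecticFamily (Fin.cons a e) (Fin.cons b f) ↔
      B a b = 1 ∧ (∀ i, e i ∈ B.orthogonal (Submodule.span F {a, b}) ∧
        f i ∈ B.orthogonal (Submodule.span F {a, b})) ∧ B.IsSymplecticFamily e f := by
  simp only [IsSymplecticFamily, Fin.forall_fin_succ, Fin.cons_zero, Fin.cons_succ,
    mem_orthogonal_span_pair, hB _, Fin.succ_inj,
    Fin.succ_ne_zero, (Fin.succ_ne_zero _).symm, if_true, if_false]
  have hsymm : ∀ x y : V, B x y = 0 ↔ B y x = 0 := fun _ _ => hB.eq_iff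
  simp only [hsymm (e _) a, hsymm (f _) b, hsymm (e _) b, true_and]
  aesop

theorem restrict_nondegenerate_iff (hB : B.IsRefl) {W : Submodule F V} :
    (B.restrict W).Nondegenerate ↔ ∀ v ∈ W, (∀ w ∈ W, B v w = 0) → v = 0 := by
  refine (hB.domRestrict W).nondegenerate_iff_separatingLeft.trans ⟨?_, ?_⟩
  · intro h v hv hw
    simpa using h ⟨v, hv⟩ fun w => hw w w.2
  · intro h v hv
    exact Subtype.ext <| h v v.2 fun w hw => hv ⟨w, hw⟩

theorem restrict_orthogonal_nondegenerate [FiniteDimensional F V] (hnd : B.Nondegenerate)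
    (hB : B.IsRefl) {W : Submodule F V} (hW : (B.restrict W).Nondegenerate) :
    (B.restrict (B.orthogonal W)).Nondegenerate := by
  rw [restrict_nondegenerate_iff_isCompl_orthogonal hB, orthogonal_orthogonal hnd hB] at *
  exact hW.symm

namespace IsSymplecticFamily

variable {m : ℕ} {e f : Fin m → V} (h : B.IsSymplecticFamily e f) (c : Fin m ⊕ Fin m → F)
include h

theorem apply_sum_right (j : Fin m) : B (∑ k, c k • Sum.elim e f k) (f j) = c (Sum.inl j) := by
  simp [Fintype.sum_sum_type, h _ j]

theorem apply_sum_left (hB : B.IsAlt) (j : Fin m) :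
    B (∑ k, c k • Sum.elim e f k) (e j) = -c (Sum.inr j) := by
  simp [Fintype.sum_sum_type, h _ j, ← hB.neg_eq (e j), h j, eq_comm (a := j)]

theorem eq_zero_of_forall_apply_eq_zero (hB : B.IsAlt)
    (hc : ∀ j, B (∑ k, c k • Sum.elim e f k) (e j) = 0 ∧ B (∑ k, c k • Sum.elim e f k) (f j) = 0) :
    c = 0 := by
  ext (j | j)
  · exact (h.apply_sum_right c j).symm.trans (hc j).2
  · exact neg_eq_zero.mp <| (h.apply_sum_left c hB j).symm.trans (hc j).1

omit c

theorem linearIndependent (hB : B.IsAlt) : LinearIndependent F (Sum.elim e f) :=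
  Fintype.linearIndependent_iff.mpr fun c hc =>
    congrFun (h.eq_zero_of_forall_apply_eq_zero c hB fun j => by simp [hc])

theorem finrank_span (hB : B.IsAlt) :
    finrank F (Submodule.span F (Set.range (Sum.elim e f))) = m + m := by
  simpa using finrank_span_eq_card (h.linearIndependent hB)

theorem restrict_span_nondegenerate (hB : B.IsAlt) :
    (B.restrict (Submodule.span F (Set.range (Sum.elim e f)))).Nondegenerate := by
  refine (restrict_nondegenerate_iff hB.isRefl).mpr fun v hv hvW => ?_
  obtain ⟨c, rfl⟩ := (Submodule.mem_span_range_iff_exists_fun F).mp hv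
  have hc := h.eq_zero_of_forall_apply_eq_zero c hB fun j =>
    ⟨hvW _ (Submodule.subset_span ⟨Sum.inl j, rfl⟩), hvW _ (Submodule.subset_span ⟨Sum.inr j, rfl⟩)⟩
  simp [hc]

theorem span_eq_iff [FiniteDimensional F V] (hB : B.IsAlt) {W : Submodule F V}
    (hW : finrank F W = m + m) :
    Submodule.span F (Set.range (Sum.elim e f)) = W ↔ ∀ i, e i ∈ W ∧ f i ∈ W := by
  refine ⟨?_, fun hi => Submodule.eq_of_le_of_finrank_eq ?_ (by rw [h.finrank_span hB, hW])⟩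
  · rintro rfl i
    exact ⟨Submodule.subset_span ⟨Sum.inl i, rfl⟩, Submodule.subset_span ⟨Sum.inr i, rfl⟩⟩
  · rw [Submodule.span_le, Set.range_subset_iff]
    rintro (i | i)
    exacts [(hi i).1, (hi i).2]

end IsSymplecticFamily

section HyperbolicPair

variable {a b : V}

theorem isSymplecticFamily_pair (hB : B.IsAlt) (hab : B a b = 1) :
    B.IsSymplecticFamily ![a] ![b] := by
  simp [IsSymplecticFamily, Fin.forall_fin_one, hB _, hab]

variable [FiniteDimensional F V] (hB : B.IsAlt) (hnd : B.Nondegenerate) (hab : B a b = 1)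
include hB hnd hab

theorem finrank_orthogonal_span_pair :
    finrank F (B.orthogonal (Submodule.span F {a, b})) = finrank F V - 2 := by
  rw [finrank_orthogonal hnd, ← range_sumElim_pair,
    (isSymplecticFamily_pair hB hab).finrank_span hB]

theorem restrict_orthogonal_span_pair_nondegenerate :
    (B.restrict (B.orthogonal (Submodule.span F {a, b}))).Nondegenerate := by
  refine restrict_orthogonal_nondegenerate hnd hB.isRefl ?_
  rw [← range_sumElim_pair]
  exact (isSymplecticFamily_pair hB hab).restrict_span_nondegenerate hB

end HyperbolicPair

theorem exists_apply_eq_one (hnd : B.Nondegenerate) {a : V} (ha : a ≠ 0) : ∃ b, B a b = 1 := by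
  obtain ⟨w, hw⟩ : ∃ w, B a w ≠ 0 := by
    by_contra! h
    exact ha (hnd.1 a h)
  exact ⟨(B a w)⁻¹ • w, by simp [hw]⟩

theorem card_apply_eq_one [Fintype F] [FiniteDimensional F V] (hnd : B.Nondegenerate) {a : V}
    (ha : a ≠ 0) : Nat.card {b // B a b = 1} = Fintype.card F ^ (finrank F V - 1) := by
  have hsurj : Function.Surjective (B a) := fun y => by
    obtain ⟨b, hb⟩ := exists_apply_eq_one hnd ha
    exact ⟨y • b, by simp [hb]⟩
  rw [show Nat.card {b // B a b = 1} = Nat.card (LinearMap.ker (B a)) from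
    Nat.card_congr (AddMonoidHom.fiberEquivKerOfSurjective (f := (B a).toAddMonoidHom) hsurj 1)]
  have := LinearMap.finrank_range_add_finrank_ker (B a)
  rw [LinearMap.range_eq_top.mpr hsurj, finrank_top, finrank_self] at this
  rw [Module.natCard_eq_pow_finrank (K := F), Nat.card_eq_fintype_card]
  congr 1
  omega

theorem card_hyperbolicPair [Fintype F] [FiniteDimensional F V] (hnd : B.Nondegenerate) :
    Nat.card {p : V × V // B p.1 p.2 = 1} =
      (Fintype.card F ^ finrank F V - 1) * Fintype.card F ^ (finrank F V - 1) := by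
  classical
  have := Module.finite_of_finite (M := V) F
  have := Fintype.ofFinite V
  have hfiber : ∀ a : V, Nat.card {b // B a b = 1} =
      if a = 0 then 0 else Fintype.card F ^ (finrank F V - 1) := fun a => by
    split_ifs with ha
    · simp [ha]
    · exact card_apply_eq_one hnd ha
  rw [Nat.card_congr (Equiv.subtypeProdEquivSigmaSubtype fun a b => B a b = 1), Nat.card_sigma,
    sum_congr rfl fun a _ => hfiber a, sum_ite, sum_const_zero, zero_add, sum_const, smul_eq_mul,
    filter_ne', card_erase_of_mem (mem_univ 0), card_univ, ← Nat.card_eq_fintype_card,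
    Module.natCard_eq_pow_finrank (K := F), Nat.card_eq_fintype_card]

theorem IsAlt.restrict (hB : B.IsAlt) (W : Submodule F V) : (B.restrict W).IsAlt :=
  fun x => hB x

def symplecticFamilyRestrictEquiv (W : Submodule F V) (m : ℕ) :
    {t : SymplecticFamily B m // ∀ i, t.1.1 i ∈ W ∧ t.1.2 i ∈ W} ≃
      SymplecticFamily (B.restrict W) m where
  toFun t := ⟨(fun i => ⟨t.1.1.1 i, (t.2 i).1⟩, fun i => ⟨t.1.1.2 i, (t.2 i).2⟩), t.1.2⟩
  invFun t := ⟨⟨(fun i => t.1.1 i, fun i => t.1.2 i), t.2⟩, fun i => ⟨(t.1.1 i).2, (t.1.2 i).2⟩⟩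
  left_inv _ := rfl
  right_inv _ := rfl

def symplecticFamilySuccEquiv (hB : B.IsAlt) (m : ℕ) :
    SymplecticFamily B (m + 1) ≃ Σ p : {p : V × V // B p.1 p.2 = 1},
      {t : SymplecticFamily B m // ∀ i, t.1.1 i ∈ B.orthogonal (Submodule.span F {p.1.1, p.1.2}) ∧
        t.1.2 i ∈ B.orthogonal (Submodule.span F {p.1.1, p.1.2})} where
  toFun s :=
    have h := (isSymplecticFamily_cons_iff hB).mp <| by
      rw [Fin.cons_self_tail, Fin.cons_self_tail]
      exact s.2
    ⟨⟨(s.1.1 0, s.1.2 0), h.1⟩, ⟨(Fin.tail s.1.1, Fin.tail s.1.2), h.2.2⟩, h.2.1⟩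
  invFun x := ⟨(Fin.cons x.1.1.1 x.2.1.1.1, Fin.cons x.1.1.2 x.2.1.1.2),
    (isSymplecticFamily_cons_iff hB).mpr ⟨x.1.2, x.2.2, x.2.1.2⟩⟩
  left_inv s := Subtype.ext (Prod.ext (Fin.cons_self_tail _) (Fin.cons_self_tail _))
  right_inv _ := rfl

theorem card_symplecticFamily [Fintype F] [FiniteDimensional F V] (hB : B.IsAlt)
    (hnd : B.Nondegenerate) (m : ℕ) :
    Nat.card (SymplecticFamily B m) = symplecticCount (Fintype.card F) (finrank F V) m := by
  induction m generalizing V with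
  | zero => exact Nat.card_eq_one_iff_unique.mpr ⟨inferInstance, ⟨⟨default, fun i => i.elim0⟩⟩⟩
  | succ m ih =>
    have := Module.finite_of_finite (M := V) F
    rw [Nat.card_congr (symplecticFamilySuccEquiv hB m),
      Nat.card_sigma_of_card_eq (c := symplecticCount (Fintype.card F) (finrank F V - 2) m),
      card_hyperbolicPair hnd, symplecticCount_succ]
    rintro ⟨⟨a, b⟩, hab⟩
    rw [Nat.card_congr (symplecticFamilyRestrictEquiv _ m),
      ih (hB.restrict _) (restrict_orthogonal_span_pair_nondegenerate hB hnd hab),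
      finrank_orthogonal_span_pair hB hnd hab]

theorem even_finrank_of_nondegenerate [FiniteDimensional F V] (hB : B.IsAlt)
    (hnd : B.Nondegenerate) : Even (finrank F V) := by
  induction hd : finrank F V using Nat.strong_induction_on generalizing V with
  | _ d ih =>
  rcases subsingleton_or_nontrivial V with hV | hV
  · rw [← hd, finrank_zero_of_subsingleton]
    exact Even.zero
  obtain ⟨a, ha⟩ := exists_ne (0 : V)
  obtain ⟨b, hab⟩ := exists_apply_eq_one hnd ha
  have h2 := Submodule.finrank_le (Submodule.span F (Set.range (Sum.elim ![a] ![b])))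
  rw [(isSymplecticFamily_pair hB hab).finrank_span hB] at h2
  obtain ⟨k, hk⟩ := ih (d - 2) (by omega) (hB.restrict _)
    (restrict_orthogonal_span_pair_nondegenerate hB hnd hab)
    (by rw [finrank_orthogonal_span_pair hB hnd hab, hd])
  exact ⟨k + 1, by omega⟩

variable [Fintype F] [FiniteDimensional F V]

theorem symplecticCount_eq_card_mul (hB : B.IsAlt) (hnd : B.Nondegenerate) (m : ℕ) :
    symplecticCount (Fintype.card F) (finrank F V) m =
      Nat.card {W : Submodule F V // (B.restrict W).Nondegenerate ∧ finrank F W = m + m} *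
        symplecticCount (Fintype.card F) (m + m) m := by
  have := Module.finite_of_finite (M := V) F
  let span : SymplecticFamily B m →
      {W : Submodule F V // (B.restrict W).Nondegenerate ∧ finrank F W = m + m} := fun s =>
    ⟨_, s.2.restrict_span_nondegenerate hB, s.2.finrank_span hB⟩
  rw [← card_symplecticFamily hB hnd, ← Nat.card_congr (Equiv.sigmaFiberEquiv span),
    Nat.card_sigma_of_card_eq]
  rintro ⟨W, hWnd, hW⟩
  have hfiber (s : SymplecticFamily B m) :
      span s = ⟨W, hWnd, hW⟩ ↔ ∀ i, s.1.1 i ∈ W ∧ s.1.2 i ∈ W :=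
    Subtype.ext_iff.trans (s.2.span_eq_iff hB hW)
  rw [Nat.card_congr ((Equiv.subtypeEquivRight hfiber).trans (symplecticFamilyRestrictEquiv W m)),
    card_symplecticFamily (hB.restrict W) hWnd, hW]

theorem card_restrict_nondegenerate_eq_sum (hB : B.IsAlt) :
    Nat.card {W : Submodule F V // (B.restrict W).Nondegenerate} =
      ∑ k ∈ (Finset.range (finrank F V + 1)).filter (fun k => k % 2 = 0),
        Nat.card {W : Submodule F V // (B.restrict W).Nondegenerate ∧ finrank F W = k} := by
  have := Module.finite_of_finite (M := V) F
  have : Finite (Submodule F V) := Finite.of_injective _ SetLike.coe_injective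
  rw [Nat.card_eq_sum_card_fiber (fun W => finrank F W.1) fun W => ?_]
  · exact sum_congr rfl fun k _ => Nat.card_congr <|
    Equiv.subtypeSubtypeEquivSubtypeInter (fun W => (B.restrict W).Nondegenerate)
      (fun W => finrank F W = k)
  · exact mem_filter.mpr ⟨Finset.mem_range.mpr (Nat.lt_succ_of_le (Submodule.finrank_le _)),
      Nat.even_iff.mp (even_finrank_of_nondegenerate (hB.restrict _) W.2)⟩

theorem card_restrict_nondegenerate_finrank_eq (hB : B.IsAlt) (hnd : B.Nondegenerate) {k : ℕ}
    (hk : k % 2 = 0) (hkd : k ≤ finrank F V) :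
    (Nat.card {W : Submodule F V // (B.restrict W).Nondegenerate ∧ finrank F W = k} : ℚ) =
      (Fintype.card F : ℚ) ^ (k * (finrank F V - k) / 2) *
        gbinom ((Fintype.card F : ℚ) ^ 2) (finrank F V / 2) (k / 2) := by
  obtain ⟨n, hn⟩ := even_finrank_of_nondegenerate hB hnd
  obtain ⟨m, rfl⟩ : ∃ m, k = m + m := ⟨k / 2, by omega⟩
  have hq : 1 < Fintype.card F := Fintype.one_lt_card
  have hpos : (symplecticCount (Fintype.card F) (m + m) m : ℚ) ≠ 0 :=
    Nat.cast_ne_zero.mpr (symplecticCount_pos hq (by omega)).ne'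
  have hexp : (m + m) * (n + n - (m + m)) / 2 = 2 * (m * (n - m)) :=
    Nat.div_eq_of_eq_mul_left two_pos (by rw [show n + n - (m + m) = 2 * (n - m) by omega]; ring)
  rw [hn, hexp, show (n + n) / 2 = n by omega, show (m + m) / 2 = m by omega,
    ← mul_left_inj' hpos, ← symplecticCount_eq_mul hq (by omega), ← hn,
    symplecticCount_eq_card_mul hB hnd m, Nat.cast_mul]

end BilinForm
end LinearMap

theorem count_nondegenerate_subspaces_symplectic_general
    (q t : ℕ) (ht : 2 ≤ t) (hteven : Even t)
    (F : Type) [Field F] [Fintype F] (hF : Fintype.card F = q)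
    (V : Type) [AddCommGroup V] [Module F V] [FiniteDimensional F V]
    (hdim : Module.finrank F V = t)
    (B : LinearMap.BilinForm F V)
    (halt : ∀ v : V, B v v = 0)
    (hnd : ∀ v : V, (∀ w : V, B v w = 0) → v = 0) :
    (Nat.card {W : Submodule F V // ∀ v ∈ W, (∀ w ∈ W, B v w = 0) → v = 0} : ℚ) =
      2 + ∑ k ∈ (Finset.Icc 2 (t - 1)).filter (fun k => k % 2 = 0),
        (q : ℚ) ^ (k * (t - k) / 2) * gbinom ((q : ℚ) ^ 2) (t / 2) (k / 2) := by
  subst hF hdim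
  have hB : B.IsAlt := halt
  have hBnd : B.Nondegenerate := .ofSeparatingLeft hnd
  have hsplit : (range (finrank F V + 1)).filter (fun k => k % 2 = 0) = insert 0
      (insert (finrank F V) ((Icc 2 (finrank F V - 1)).filter fun k => k % 2 = 0)) := by
    ext k
    simp only [mem_filter, mem_insert, mem_range, mem_Icc]
    grind
  rw [← Nat.card_congr (Equiv.subtypeEquivRight fun W => restrict_nondegenerate_iff hB.isRefl),
    card_restrict_nondegenerate_eq_sum hB, Nat.cast_sum, sum_congr rfl fun k hk =>
      card_restrict_nondegenerate_finrank_eq hB hBnd (mem_filter.mp hk).2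
        (Nat.le_of_lt_succ (mem_range.mp (mem_filter.mp hk).1)),
    hsplit, sum_insert (by simp; omega), sum_insert (by simp; omega)]
  have hQ : (1 : ℚ) < (Fintype.card F : ℚ) ^ 2 :=
    one_lt_pow₀ (by exact_mod_cast Fintype.one_lt_card) two_ne_zero
  simp only [zero_mul, Nat.zero_div, Nat.sub_self, mul_zero, pow_zero, one_mul, gbinom_zero,
    gbinom_self hQ]
  ring

/-- number of non-degenerate subspaces of a non-degenerate
symplectic (alternating) space of even dimension `t` over `F_q`. -/
theorem count_nondegenerate_subspaces_symplectic
    (q t : ℕ) (hq : IsPrimePow q) (ht : 2 ≤ t) (hteven : Even t)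
    (F : Type) [Field F] [Fintype F] (hF : Fintype.card F = q)
    (V : Type) [AddCommGroup V] [Module F V] [FiniteDimensional F V]
    (hdim : Module.finrank F V = t)
    (B : LinearMap.BilinForm F V)
    (halt : ∀ v : V, B v v = 0)
    (hnd : ∀ v : V, (∀ w : V, B v w = 0) → v = 0) :
    (Nat.card {W : Submodule F V // ∀ v ∈ W, (∀ w ∈ W, B v w = 0) → v = 0} : ℚ) =
      2 + ∑ k ∈ (Finset.Icc 2 (t - 1)).filter (fun k => k % 2 = 0),
        (q : ℚ) ^ (k * (t - k) / 2) * gbinom ((q : ℚ) ^ 2) (t / 2) (k / 2) :=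
  count_nondegenerate_subspaces_symplectic_general q t ht hteven F hF V hdim B halt hnd
end

section
/- Let q be a prime power with q ≡ 3 (mod 4), let λ be an odd positive integer, and let μ be a positive integer with μ ≤ λ. Then both of the rational numbers ((q^μ+1)(q^{λ−μ}+1) / (2(q^λ+1))) · [λ, μ]_{q²} and ((q^μ−1)(q^{λ−μ}−1) / (2(q^λ+1))) · [λ, μ]_{q²} are integers. -/
namespace GBaux

/-- `q`-factorial-like product `∏_{i=1}^n (Q^i - 1)`. -/
def Ff (Q : ℚ) (n : ℕ) : ℚ := ∏ i ∈ Finset.range n, (Q ^ (i+1) - 1)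

lemma Ff_zero (Q : ℚ) : Ff Q 0 = 1 := by simp [Ff]

lemma Ff_succ (Q : ℚ) (n : ℕ) : Ff Q (n+1) = Ff Q n * (Q ^ (n+1) - 1) :=
  Finset.prod_range_succ _ _

lemma Ff_ne_zero {Q : ℚ} (hQ : 1 < Q) (n : ℕ) : Ff Q n ≠ 0 := by
  apply Finset.prod_ne_zero_iff.mpr
  intro i _
  have : 1 < Q ^ (i+1) := one_lt_pow₀ hQ (by omega)
  intro h
  nlinarith

lemma prod_top (Q : ℚ) : ∀ b a : ℕ, b ≤ a →
    Ff Q (a - b) * ∏ i ∈ Finset.range b, (Q ^ (a - i) - 1) = Ff Q a := by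
  intro b
  induction b with
  | zero => intro a _; simp
  | succ b ih =>
    intro a hba
    rw [Finset.prod_range_succ]
    have h1 : a - (b+1) + 1 = a - b := by omega
    have h2 : Ff Q (a - b) = Ff Q (a - (b+1)) * (Q ^ (a - b) - 1) := by
      rw [← h1, Ff_succ]
    calc Ff Q (a - (b+1)) * ((∏ i ∈ Finset.range b, (Q ^ (a - i) - 1)) * (Q ^ (a - b) - 1))
        = (Ff Q (a - (b+1)) * (Q ^ (a - b) - 1)) * ∏ i ∈ Finset.range b, (Q ^ (a - i) - 1) := by
          ring
      _ = Ff Q (a - b) * ∏ i ∈ Finset.range b, (Q ^ (a - i) - 1) := by rw [← h2]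
      _ = Ff Q a := ih a (by omega)

lemma prod_num (Q : ℚ) {a b : ℕ} (hba : b ≤ a) :
    ∏ i ∈ Finset.range b, (Q ^ a - Q ^ i)
      = (∏ i ∈ Finset.range b, Q ^ i) * ∏ i ∈ Finset.range b, (Q ^ (a - i) - 1) := by
  rw [← Finset.prod_mul_distrib]
  apply Finset.prod_congr rfl
  intro i hi
  have hia : i ≤ a := by
    have := Finset.mem_range.mp hi; omega
  have h : Q ^ i * Q ^ (a - i) = Q ^ a := by
    rw [← pow_add]; congr 1; omega
  linear_combination -h

lemma gb_fact {Q : ℚ} (hQ : 1 < Q) {a b : ℕ} (hba : b ≤ a) :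
    gbinom Q a b = Ff Q a / (Ff Q b * Ff Q (a - b)) := by
  have hQ0 : Q ≠ 0 := by intro h; rw [h] at hQ; norm_num at hQ
  have hP0 : (∏ i ∈ Finset.range b, Q ^ i) ≠ 0 :=
    Finset.prod_ne_zero_iff.mpr (fun i _ => pow_ne_zero _ hQ0)
  have htop : ∏ i ∈ Finset.range b, (Q ^ (a - i) - 1) = Ff Q a / Ff Q (a - b) := by
    rw [eq_div_iff (Ff_ne_zero hQ _), mul_comm]
    exact prod_top Q b a hba
  have hbot : ∏ i ∈ Finset.range b, (Q ^ (b - i) - 1) = Ff Q b := by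
    have := prod_top Q b b le_rfl
    simpa [Ff_zero] using this
  unfold gbinom
  rw [Finset.prod_div_distrib, prod_num Q hba, prod_num Q (le_refl b), htop, hbot]
  have hFa := Ff_ne_zero hQ a
  have hFb := Ff_ne_zero hQ b
  have hFab := Ff_ne_zero hQ (a - b)
  field_simp

lemma gb_zero (Q : ℚ) {a b : ℕ} (h : a < b) : gbinom Q a b = 0 := by
  apply Finset.prod_eq_zero (Finset.mem_range.mpr h)
  simp

lemma gb_diag {Q : ℚ} (hQ : 1 < Q) (n : ℕ) : gbinom Q n n = 1 := by
  rw [gb_fact hQ le_rfl, Nat.sub_self, Ff_zero, mul_one,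
    div_self (Ff_ne_zero hQ n)]

lemma gb_pascal {Q : ℚ} (hQ : 1 < Q) (a b : ℕ) :
    gbinom Q (a+1) (b+1) = Q ^ (b+1) * gbinom Q a (b+1) + gbinom Q a b := by
  rcases lt_trichotomy a b with h | h | h
  · rw [gb_zero Q (by omega), gb_zero Q (by omega), gb_zero Q (by omega)]
    ring
  · subst h
    rw [gb_diag hQ, gb_zero Q (by omega), gb_diag hQ]
    ring
  · -- b < a
    obtain ⟨e, rfl⟩ : ∃ e, a = b + 1 + e := ⟨a - b - 1, by omega⟩
    rw [gb_fact hQ (by omega), gb_fact hQ (by omega), gb_fact hQ (by omega)]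
    rw [show b + 1 + e + 1 - (b+1) = e + 1 from by omega,
        show b + 1 + e - (b+1) = e from by omega,
        show b + 1 + e - b = e + 1 from by omega]
    rw [show Ff Q (b+1+e+1) = Ff Q (b+1+e) * (Q ^ (b+1+e+1) - 1) from Ff_succ Q _,
        show Ff Q (b+1) = Ff Q b * (Q ^ (b+1) - 1) from Ff_succ Q _,
        show Ff Q (e+1) = Ff Q e * (Q ^ (e+1) - 1) from Ff_succ Q _]
    have hA := Ff_ne_zero hQ (b+1+e)
    have hB := Ff_ne_zero hQ b
    have hC := Ff_ne_zero hQ e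
    have h1 : Q ^ (b+1) - 1 ≠ 0 := by
      have : 1 < Q ^ (b+1) := one_lt_pow₀ hQ (by omega)
      intro h; nlinarith
    have h2 : Q ^ (e+1) - 1 ≠ 0 := by
      have : 1 < Q ^ (e+1) := one_lt_pow₀ hQ (by omega)
      intro h; nlinarith
    field_simp
    ring

/-- Integer-valued Gaussian binomial, defined by the `q`-Pascal recursion. -/
def G (Q : ℤ) : ℕ → ℕ → ℤ
  | _, 0 => 1
  | 0, _+1 => 0
  | a+1, b+1 => Q ^ (b+1) * G Q a (b+1) + G Q a b

lemma gb_G (Q : ℤ) (hQ : 1 < Q) : ∀ a b : ℕ, ((G Q a b : ℤ) : ℚ) = gbinom (Q : ℚ) a b := by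
  have hQq : (1:ℚ) < (Q : ℚ) := by exact_mod_cast hQ
  intro a
  induction a with
  | zero =>
    intro b
    cases b with
    | zero => simp [G, gbinom]
    | succ b => rw [gb_zero _ (by omega)]; simp [G]
  | succ a ih =>
    intro b
    cases b with
    | zero => simp [G, gbinom]
    | succ b =>
      rw [show G Q (a+1) (b+1) = Q ^ (b+1) * G Q a (b+1) + G Q a b from rfl]
      push_cast
      rw [ih, ih, gb_pascal hQq a b]

lemma G_parity (Q : ℤ) (hQ : Q % 2 = 1) :
    ∀ a b : ℕ, G Q a b % 2 = ((a.choose b : ℤ)) % 2 := by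
  have hQm : Q ≡ 1 [ZMOD 2] := by
    show Q % 2 = 1 % 2
    omega
  intro a
  induction a with
  | zero =>
    intro b
    cases b with
    | zero => simp [G]
    | succ b => simp [G]
  | succ a ih =>
    intro b
    cases b with
    | zero => simp [G]
    | succ b =>
      rw [show G Q (a+1) (b+1) = Q ^ (b+1) * G Q a (b+1) + G Q a b from rfl]
      have m1 : Q ^ (b+1) * G Q a (b+1) ≡ 1 * (a.choose (b+1) : ℤ) [ZMOD 2] := by
        apply Int.ModEq.mul
        · simpa using hQm.pow (b+1)
        · exact ih (b+1)
      have m2 : G Q a b ≡ (a.choose b : ℤ) [ZMOD 2] := ih b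
      have := m1.add m2
      have hc : (((a+1).choose (b+1) : ℕ) : ℤ) = (a.choose b : ℤ) + (a.choose (b+1) : ℤ) := by
        push_cast [Nat.choose_succ_succ]
        ring
      show _ % 2 = _ % 2
      have h1 : (Q ^ (b+1) * G Q a (b+1) + G Q a b) % 2 =
          (1 * (a.choose (b+1) : ℤ) + (a.choose b : ℤ)) % 2 := this
      omega

end GBaux

open GBaux

lemma main_half (q t e : ℕ) (hq3 : 3 ≤ q) (hodd : q % 2 = 1) :
    ∃ z : ℤ, ((q:ℚ)^(t+1)+1) * ((q:ℚ)^(t+e+2)+1) / (2*((q:ℚ)^(2*t+e+3)+1))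
      * gbinom ((q:ℚ)^2) (2*t+e+3) (t+1) = (z : ℚ) := by
  have hq3q : (3:ℚ) ≤ (q:ℚ) := by exact_mod_cast hq3
  have hQq : (1:ℚ) < (q:ℚ)^2 := by nlinarith
  have hQz : (1:ℤ) < (q:ℤ)^2 := by
    have : (3:ℤ) ≤ (q:ℤ) := by exact_mod_cast hq3
    nlinarith
  have hGg : ∀ a b : ℕ, ((G ((q:ℤ)^2) a b : ℤ) : ℚ) = gbinom ((q:ℚ)^2) a b := by
    intro a b
    have h := gb_G ((q:ℤ)^2) hQz a b
    rwa [show (((q:ℤ)^2 : ℤ) : ℚ) = (q:ℚ)^2 from by push_cast; ring] at h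
  -- parity of the integer numerator
  set num : ℤ := G ((q:ℤ)^2) (2*t+e+3) (t+1) + (q:ℤ)^(t+1) * G ((q:ℤ)^2) (2*t+e+2) (t+1)
      + (q:ℤ)^(t+e+2) * G ((q:ℤ)^2) (2*t+e+2) t with hnum
  have hQodd : ((q:ℤ)^2) % 2 = 1 := by
    have h2 : (q:ℤ) % 2 = 1 := by omega
    have : (q:ℤ)^2 ≡ 1^2 [ZMOD 2] := Int.ModEq.pow 2 (by show _ % 2 = _ % 2; omega)
    simpa [Int.ModEq] using this
  have hqodd : ∀ k : ℕ, (q:ℤ)^k % 2 = 1 := by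
    intro k
    have h2 : (q:ℤ) ≡ 1 [ZMOD 2] := by show _ % 2 = _ % 2; omega
    have := h2.pow k
    simpa [Int.ModEq] using this
  have hpar : num % 2 = 0 := by
    have g1 := G_parity _ hQodd (2*t+e+3) (t+1)
    have g2 := G_parity _ hQodd (2*t+e+2) (t+1)
    have g3 := G_parity _ hQodd (2*t+e+2) t
    have hc : (2*t+e+3).choose (t+1) = (2*t+e+2).choose t + (2*t+e+2).choose (t+1) := by
      rw [show 2*t+e+3 = (2*t+e+2)+1 from by omega]
      exact Nat.choose_succ_succ _ _
    have hcz : ((2*t+e+3).choose (t+1) : ℤ)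
        = ((2*t+e+2).choose t : ℤ) + ((2*t+e+2).choose (t+1) : ℤ) := by
      exact_mod_cast congrArg (Nat.cast : ℕ → ℤ) hc
    have o1 := hqodd (t+1)
    have o2 := hqodd (t+e+2)
    have m1 : ((q:ℤ)^(t+1) * G ((q:ℤ)^2) (2*t+e+2) (t+1)) % 2
        = (((2*t+e+2).choose (t+1) : ℤ)) % 2 := by
      have : (q:ℤ)^(t+1) * G ((q:ℤ)^2) (2*t+e+2) (t+1)
          ≡ 1 * ((2*t+e+2).choose (t+1) : ℤ) [ZMOD 2] :=
        Int.ModEq.mul (by show _ % 2 = _ % 2; omega) g2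
      simpa [Int.ModEq] using this
    have m2 : ((q:ℤ)^(t+e+2) * G ((q:ℤ)^2) (2*t+e+2) t) % 2
        = (((2*t+e+2).choose t : ℤ)) % 2 := by
      have : (q:ℤ)^(t+e+2) * G ((q:ℤ)^2) (2*t+e+2) t
          ≡ 1 * ((2*t+e+2).choose t : ℤ) [ZMOD 2] :=
        Int.ModEq.mul (by show _ % 2 = _ % 2; omega) g3
      simpa [Int.ModEq] using this
    omega
  obtain ⟨k, hk⟩ : ∃ k : ℤ, num = 2 * k := ⟨num / 2, by omega⟩
  refine ⟨k, ?_⟩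
  -- factorized forms of the three Gaussian binomials
  have f0 : gbinom ((q:ℚ)^2) (2*t+e+3) (t+1)
      = Ff ((q:ℚ)^2) (2*t+e+3) / (Ff ((q:ℚ)^2) (t+1) * Ff ((q:ℚ)^2) (t+e+2)) := by
    rw [gb_fact hQq (by omega), show 2*t+e+3 - (t+1) = t+e+2 from by omega]
  have f1 : gbinom ((q:ℚ)^2) (2*t+e+2) (t+1)
      = Ff ((q:ℚ)^2) (2*t+e+2) / (Ff ((q:ℚ)^2) (t+1) * Ff ((q:ℚ)^2) (t+e+1)) := by
    rw [gb_fact hQq (by omega), show 2*t+e+2 - (t+1) = t+e+1 from by omega]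
  have f2 : gbinom ((q:ℚ)^2) (2*t+e+2) t
      = Ff ((q:ℚ)^2) (2*t+e+2) / (Ff ((q:ℚ)^2) t * Ff ((q:ℚ)^2) (t+e+2)) := by
    rw [gb_fact hQq (by omega), show 2*t+e+2 - t = t+e+2 from by omega]
  have ch1 : Ff ((q:ℚ)^2) (t+1) = Ff ((q:ℚ)^2) t * (((q:ℚ)^2) ^ (t+1) - 1) := Ff_succ _ _
  have ch2 : Ff ((q:ℚ)^2) (t+e+2) = Ff ((q:ℚ)^2) (t+e+1) * (((q:ℚ)^2) ^ (t+e+2) - 1) :=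
    Ff_succ _ _
  have ch3 : Ff ((q:ℚ)^2) (2*t+e+3) = Ff ((q:ℚ)^2) (2*t+e+2) * (((q:ℚ)^2) ^ (2*t+e+3) - 1) := by
    rw [show 2*t+e+3 = (2*t+e+2)+1 from by omega]
    exact Ff_succ _ _
  have hA := Ff_ne_zero hQq t
  have hB := Ff_ne_zero hQq (t+e+1)
  have hC := Ff_ne_zero hQq (2*t+e+2)
  have hq0 : (0:ℚ) < (q:ℚ) := by linarith
  have hx1 : ((q:ℚ)^2) ^ (t+1) - 1 ≠ 0 := by
    have : 1 < ((q:ℚ)^2) ^ (t+1) := one_lt_pow₀ hQq (by omega)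
    intro h; nlinarith
  have hx2 : ((q:ℚ)^2) ^ (t+e+2) - 1 ≠ 0 := by
    have : 1 < ((q:ℚ)^2) ^ (t+e+2) := one_lt_pow₀ hQq (by omega)
    intro h; nlinarith
  have hD : (q:ℚ)^(2*t+e+3) + 1 ≠ 0 := by positivity
  have key : ((q:ℚ)^(t+1)+1) * ((q:ℚ)^(t+e+2)+1) / (2*((q:ℚ)^(2*t+e+3)+1))
      * gbinom ((q:ℚ)^2) (2*t+e+3) (t+1)
      = ((G ((q:ℤ)^2) (2*t+e+3) (t+1) : ℚ) + (q:ℚ)^(t+1) * (G ((q:ℤ)^2) (2*t+e+2) (t+1) : ℚ)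
        + (q:ℚ)^(t+e+2) * (G ((q:ℤ)^2) (2*t+e+2) t : ℚ)) / 2 := by
    rw [hGg, hGg, hGg, f0, f1, f2, ch3, ch1, ch2]
    field_simp
    ring
  rw [key]
  have hnc : ((num : ℤ) : ℚ) = (G ((q:ℤ)^2) (2*t+e+3) (t+1) : ℚ)
      + (q:ℚ)^(t+1) * (G ((q:ℤ)^2) (2*t+e+2) (t+1) : ℚ)
      + (q:ℚ)^(t+e+2) * (G ((q:ℤ)^2) (2*t+e+2) t : ℚ) := by
    rw [hnum]; push_cast; ring
  rw [← hnc, hk]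
  push_cast
  ring

/-- divisibility result for `q ≡ 3 (mod 4)` and odd `λ`. -/
theorem gaussian_binom_divisibility_three_mod_four
    (q lam mu : ℕ) (hq : IsPrimePow q) (hq4 : q % 4 = 3)
    (hlam0 : 0 < lam) (hlamodd : Odd lam) (hmu0 : 0 < mu) (hle : mu ≤ lam) :
    (∃ z : ℤ, ((q : ℚ) ^ mu + 1) * ((q : ℚ) ^ (lam - mu) + 1) / (2 * ((q : ℚ) ^ lam + 1)) *
      gbinom ((q : ℚ) ^ 2) lam mu = (z : ℚ)) ∧
    (∃ z : ℤ, ((q : ℚ) ^ mu - 1) * ((q : ℚ) ^ (lam - mu) - 1) / (2 * ((q : ℚ) ^ lam + 1)) *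
      gbinom ((q : ℚ) ^ 2) lam mu = (z : ℚ)) := by
  have hq3 : 3 ≤ q := by omega
  have hodd : q % 2 = 1 := by omega
  have hq3q : (3:ℚ) ≤ (q:ℚ) := by exact_mod_cast hq3
  have hQq : (1:ℚ) < (q:ℚ)^2 := by nlinarith
  have hQz : (1:ℤ) < (q:ℤ)^2 := by
    have : (3:ℤ) ≤ (q:ℤ) := by exact_mod_cast hq3
    nlinarith
  obtain ⟨lk, hlk⟩ := hlamodd
  have hA : ∃ z : ℤ, ((q : ℚ) ^ mu + 1) * ((q : ℚ) ^ (lam - mu) + 1) / (2 * ((q : ℚ) ^ lam + 1)) *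
      gbinom ((q : ℚ) ^ 2) lam mu = (z : ℚ) := by
    rcases eq_or_lt_of_le hle with h | hlt
    · -- mu = lam
      subst h
      refine ⟨1, ?_⟩
      rw [Nat.sub_self, pow_zero, gb_diag hQq]
      have hD : (q:ℚ)^mu + 1 ≠ 0 := by positivity
      push_cast
      field_simp
      ring
    · rcases lt_or_ge mu (lam - mu) with hc | hc
      · -- mu < lam - mu
        obtain ⟨t, rfl⟩ : ∃ t, mu = t + 1 := ⟨mu - 1, by omega⟩
        obtain ⟨e, rfl⟩ : ∃ e, lam = 2*t+e+3 := ⟨lam - 2*t - 3, by omega⟩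
        rw [show 2*t+e+3 - (t+1) = t+e+2 from by omega]
        exact main_half q t e hq3 hodd
      · -- lam - mu ≤ mu, and lam - mu < mu since lam is odd
        have hc' : lam - mu < mu := by omega
        obtain ⟨t, ht⟩ : ∃ t, lam - mu = t + 1 := ⟨lam - mu - 1, by omega⟩
        obtain ⟨e, he⟩ : ∃ e, mu = t + e + 2 := ⟨mu - t - 2, by omega⟩
        have hlam : lam = 2*t+e+3 := by omega
        subst he hlam
        rw [show 2*t+e+3 - (t+e+2) = t+1 from by omega]
        have hsym : gbinom ((q:ℚ)^2) (2*t+e+3) (t+e+2) = gbinom ((q:ℚ)^2) (2*t+e+3) (t+1) := by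
          rw [gb_fact hQq (by omega), gb_fact hQq (by omega),
            show 2*t+e+3 - (t+e+2) = t+1 from by omega,
            show 2*t+e+3 - (t+1) = t+e+2 from by omega]
          ring
        rw [hsym]
        obtain ⟨z, hz⟩ := main_half q t e hq3 hodd
        exact ⟨z, by rw [← hz]; ring⟩
  obtain ⟨z, hz⟩ := hA
  refine ⟨⟨z, hz⟩, ⟨G ((q:ℤ)^2) lam mu - z, ?_⟩⟩
  have hGg : ((G ((q:ℤ)^2) lam mu : ℤ) : ℚ) = gbinom ((q:ℚ)^2) lam mu := by
    have h := gb_G ((q:ℤ)^2) hQz lam mu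
    rwa [show (((q:ℤ)^2 : ℤ) : ℚ) = (q:ℚ)^2 from by push_cast; ring] at h
  have hxy : (q:ℚ)^mu * (q:ℚ)^(lam-mu) = (q:ℚ)^lam := by
    rw [← pow_add]; congr 1; omega
  have hD : (q:ℚ)^lam + 1 ≠ 0 := by positivity
  push_cast
  rw [← hz, ← hGg]
  field_simp
  linear_combination (2 * ((G ((q:ℤ)^2) lam mu : ℤ) : ℚ)) * hxy
end
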